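/- arXiv:2407.14764 — 3 statements merged into one kernel-verified Lean document; each statement's English description precedes it below -/
import Mathlib

section
/- Let Γ ⊆ ℝ^n be a positive affine semigroup. Then the lattice generated by the dual semigroup equals the dual lattice of Λ_Γ, i.e. Λ_{Γ*} = (Λ_Γ)*. -/
open Matrix BigOperators

noncomputable section

/-- The ambient space `ℝ^n`. -/
abbrev V (n : ℕ) := Fin n → ℝ

/-- The difference set `Λ_Γ = {x - y : x, y ∈ Γ}` of a set `Γ ⊆ ℝ^n`. -/
def diffSet {n : ℕ} (Γ : Set (V n)) : Set (V n) := {z | ∃ x ∈ Γ, ∃ y ∈ Γ, z = x - y}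

/-- A set is discrete if each of its points is isolated in it. -/
def IsDiscreteSet {n : ℕ} (Λ : Set (V n)) : Prop :=
  ∀ x ∈ Λ, ∃ ε : ℝ, 0 < ε ∧ ∀ y ∈ Λ, dist y x < ε → y = x

/-- An affine semigroup: a finitely generated additive submonoid of `ℝ^n` whose
difference group is discrete (a lattice). -/
def IsAffineSemigroup {n : ℕ} (Γ : Set (V n)) : Prop :=
  (∃ S : Finset (V n), (AddSubmonoid.closure (S : Set (V n)) : Set (V n)) = Γ) ∧
    IsDiscreteSet (diffSet Γ)

/-- A set is positive if `0` is its only element whose negative also belongs to it. -/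
def IsPositive {n : ℕ} (Γ : Set (V n)) : Prop := ∀ x ∈ Γ, -x ∈ Γ → x = 0

/-- The convex cone `K_Γ` of all nonnegative real combinations of elements of `Γ`. -/
def coneOf {n : ℕ} (Γ : Set (V n)) : Set (V n) :=
  {y | ∃ (k : ℕ) (c : Fin k → ℝ) (v : Fin k → V n),
    (∀ i, 0 ≤ c i) ∧ (∀ i, v i ∈ Γ) ∧ y = ∑ i, c i • v i}

/-- The dual cone `K* = {y : ⟨x,y⟩ ≥ 0 for all x ∈ K}`. -/
def dualCone {n : ℕ} (K : Set (V n)) : Set (V n) := {y | ∀ x ∈ K, 0 ≤ x ⬝ᵥ y}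

/-- The dual lattice `Λ* = {w ∈ span(Λ) : ⟨w,v⟩ ∈ ℤ for all v ∈ Λ}`. -/
def dualLattice {n : ℕ} (Λ : Set (V n)) : Set (V n) :=
  {w | w ∈ Submodule.span ℝ Λ ∧ ∀ v ∈ Λ, ∃ m : ℤ, w ⬝ᵥ v = (m : ℝ)}

/-- The dual affine semigroup `Γ* = (Λ_Γ)* ∩ (K_Γ)*`. -/
def dualSemigroup {n : ℕ} (Γ : Set (V n)) : Set (V n) :=
  dualLattice (diffSet Γ) ∩ dualCone (coneOf Γ)

/-- `A` generates the additive monoid `Γ`. -/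
def IsGenSet {n : ℕ} (A Γ : Set (V n)) : Prop := (AddSubmonoid.closure A : Set (V n)) = Γ

/-- `A` is a minimal generating set of the additive monoid `Γ`: it generates, and no
proper subset of it generates. -/
def IsMinGenSet {n : ℕ} (A Γ : Set (V n)) : Prop :=
  IsGenSet A Γ ∧ ∀ B ⊂ A, ¬ IsGenSet B Γ

/-- `S` is the slack matrix of the positive affine semigroup `Γ`: its `(i,j)` entry is
`⟨a i, b j⟩` where `a`, `b` enumerate the minimal generating sets of `Γ` and `Γ*`. -/
def IsSlackMatrix {n k l : ℕ} (Γ : Set (V n)) (S : Matrix (Fin k) (Fin l) ℤ) : Prop :=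
  ∃ (a : Fin k → V n) (b : Fin l → V n),
    Function.Injective a ∧ Function.Injective b ∧
    IsMinGenSet (Set.range a) Γ ∧ IsMinGenSet (Set.range b) (dualSemigroup Γ) ∧
    ∀ i j, (S i j : ℝ) = a i ⬝ᵥ b j

/-- The `i`-th row of an integer matrix, viewed as a real vector. -/
def rowVec {k l : ℕ} (S : Matrix (Fin k) (Fin l) ℤ) (i : Fin k) : V l := fun j => (S i j : ℝ)

/-- The `j`-th column of an integer matrix, viewed as a real vector. -/
def colVec {k l : ℕ} (S : Matrix (Fin k) (Fin l) ℤ) (j : Fin l) : V k := fun i => (S i j : ℝ)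

/-- `Γ_S^row`: all nonnegative integer combinations of the rows of `S`. -/
def GammaRow {k l : ℕ} (S : Matrix (Fin k) (Fin l) ℤ) : Set (V l) :=
  {x | ∃ c : Fin k → ℕ, x = ∑ i, (c i : ℝ) • rowVec S i}

/-- `Γ_S^col`: all nonnegative integer combinations of the columns of `S`. -/
def GammaCol {k l : ℕ} (S : Matrix (Fin k) (Fin l) ℤ) : Set (V k) :=
  {x | ∃ c : Fin l → ℕ, x = ∑ j, (c j : ℝ) • colVec S j}

/-- `Λ_S^row`: all integer combinations of the rows of `S`. -/
def LambdaRow {k l : ℕ} (S : Matrix (Fin k) (Fin l) ℤ) : Set (V l) :=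
  {x | ∃ c : Fin k → ℤ, x = ∑ i, (c i : ℝ) • rowVec S i}

/-- `Λ_S^col`: all integer combinations of the columns of `S`. -/
def LambdaCol {k l : ℕ} (S : Matrix (Fin k) (Fin l) ℤ) : Set (V k) :=
  {x | ∃ c : Fin l → ℤ, x = ∑ j, (c j : ℝ) • colVec S j}

/-- `K_S^row`: all nonnegative real combinations of the rows of `S`. -/
def KRow {k l : ℕ} (S : Matrix (Fin k) (Fin l) ℤ) : Set (V l) :=
  {x | ∃ c : Fin k → ℝ, (∀ i, 0 ≤ c i) ∧ x = ∑ i, c i • rowVec S i}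

/-- `K_S^col`: all nonnegative real combinations of the columns of `S`. -/
def KCol {k l : ℕ} (S : Matrix (Fin k) (Fin l) ℤ) : Set (V k) :=
  {x | ∃ c : Fin l → ℝ, (∀ j, 0 ≤ c j) ∧ x = ∑ j, c j • colVec S j}

/-- `Row(S)`: the row space of `S` over `ℝ`. -/
def RowSpace {k l : ℕ} (S : Matrix (Fin k) (Fin l) ℤ) : Set (V l) :=
  (Submodule.span ℝ (Set.range (rowVec S)) : Set (V l))

/-- `Col(S)`: the column space of `S` over `ℝ`. -/
def ColSpace {k l : ℕ} (S : Matrix (Fin k) (Fin l) ℤ) : Set (V k) :=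
  (Submodule.span ℝ (Set.range (colVec S)) : Set (V k))

/-- `ℤ^l` viewed inside `ℝ^l`. -/
def intPts (l : ℕ) : Set (V l) := {x | ∀ j, ∃ m : ℤ, x j = (m : ℝ)}

/-- `ℤ₊^l` viewed inside `ℝ^l`. -/
def nnIntPts (l : ℕ) : Set (V l) := {x | ∀ j, ∃ m : ℕ, x j = (m : ℝ)}

/-- `ℝ₊^l`: the nonnegative orthant. -/
def nnPts (l : ℕ) : Set (V l) := {x | ∀ j, 0 ≤ x j}

/-- `ι` (a linear map restricting to an additive semigroup homomorphism `Γ → Γ'`) is a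
lift of the positive affine semigroup `Γ`: `Γ'` is a positive affine semigroup and the
adjoint `ι*` (characterized on `Γ` by `⟨x, ι*(y)⟩ = ⟨ι(x), y⟩`) satisfies
`ι*(Γ'*) = Γ*`. -/
structure IsLift {n N : ℕ} (Γ : Set (V n)) (Γ' : Set (V N)) (ι : (V n) →ₗ[ℝ] (V N)) : Prop where
  lift_semigroup : IsAffineSemigroup Γ'
  lift_positive : IsPositive Γ'
  maps_to : ∀ x ∈ Γ, ι x ∈ Γ'
  adjoint_mem : ∀ y ∈ dualSemigroup Γ', ∃ z ∈ dualSemigroup Γ, ∀ x ∈ Γ, x ⬝ᵥ z = (ι x) ⬝ᵥ y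
  adjoint_surj : ∀ z ∈ dualSemigroup Γ, ∃ y ∈ dualSemigroup Γ', ∀ x ∈ Γ, x ⬝ᵥ z = (ι x) ⬝ᵥ y

/-- The nonnegative integer rank: the least inner dimension of a factorization
`A = B * C` with `B`, `C` nonnegative integer matrices. -/
def nnIntRank {m l : Type*} [Fintype m] [Fintype l] (A : Matrix m l ℤ) : ℕ :=
  sInf {r : ℕ | ∃ (B : Matrix m (Fin r) ℤ) (C : Matrix (Fin r) l ℤ),
    (∀ i j, 0 ≤ B i j) ∧ (∀ i j, 0 ≤ C i j) ∧ A = B * C}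

/-- The nonnegative rank: the least inner dimension of a factorization
`A = B * C` with `B`, `C` nonnegative real matrices. -/
def nnRank {m l : Type*} [Fintype m] [Fintype l] (A : Matrix m l ℤ) : ℕ :=
  sInf {r : ℕ | ∃ (B : Matrix m (Fin r) ℝ) (C : Matrix (Fin r) l ℝ),
    (∀ i j, 0 ≤ B i j) ∧ (∀ i j, 0 ≤ C i j) ∧ A.map (fun z => (z : ℝ)) = B * C}

/-- The Fibonacci semigroup `Γ^Fib_n = ℤ² ∩ {(x,y) : 0 ≤ F_{2n}·y ≤ F_{2n+2}·x}`
(with `Nat.fib`, so `F 1 = F 2 = 1`). -/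
def GammaFib (n : ℕ) : Set (V 2) :=
  {p | (∃ a : ℤ, p 0 = (a : ℝ)) ∧ (∃ b : ℤ, p 1 = (b : ℝ)) ∧
    0 ≤ (Nat.fib (2 * n) : ℝ) * p 1 ∧
    (Nat.fib (2 * n) : ℝ) * p 1 ≤ (Nat.fib (2 * n + 2) : ℝ) * p 0}

/-- Fibonacci numbers extended to negative indices by `F_{-m} = (-1)^{m+1} F_m`. -/
def fibZ (m : ℤ) : ℤ :=
  if 0 ≤ m then (Nat.fib m.toNat : ℤ)
  else (-1) ^ ((-m).toNat + 1) * (Nat.fib (-m).toNat : ℤ)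

/-- The `(n+1) × (n+1)` Toeplitz matrix with `(i,j)` entry `F_{2(i-j)+1}`. -/
def Mfib (n : ℕ) : Matrix (Fin (n + 1)) (Fin (n + 1)) ℤ :=
  fun i j => fibZ (2 * ((i : ℤ) - (j : ℤ)) + 1)

/-- `‖A‖₁`: the sum of all entries of a matrix. -/
def entrySum {m l : Type*} [Fintype m] [Fintype l] (A : Matrix m l ℤ) : ℤ := ∑ i, ∑ j, A i j

/-
`Γ*` lies in the group `Λ*`, so `Λ_{Γ*} ⊆ Λ*`. Conversely, positivity of `Γ` yields `u ∈ Λ*`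
with `⟨s, u⟩ ≥ 1` for every nonzero generator `s` of `Γ`; for `w ∈ Λ*` and `N` large, both
`w + N u` and `N u` then lie in `Γ*`, and `w` is their difference.

To find `u`, take coordinates of `Λ` in a lattice basis: the dual basis lies in `Λ*`, and
positivity says that the coordinate vectors of the nonzero generators admit no nontrivial
nonnegative integer relation. Gordan's theorem over `ℤ`, proved by induction on the number of
vectors, then gives an integer vector pairing positively with all of them.
-/

open Finset

def dualLatticeSubgroup {n : ℕ} (Λ : Set (V n)) : AddSubgroup (V n) where
  carrier := dualLattice Λ
  add_mem' := by
    rintro x y ⟨hxΛ, hx⟩ ⟨hyΛ, hy⟩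
    refine ⟨add_mem hxΛ hyΛ, fun v hv => ?_⟩
    obtain ⟨a, ha⟩ := hx v hv
    obtain ⟨b, hb⟩ := hy v hv
    exact ⟨a + b, by rw [add_dotProduct, ha, hb, Int.cast_add]⟩
  zero_mem' := ⟨zero_mem _, fun _ _ => ⟨0, by simp⟩⟩
  neg_mem' := by
    rintro x ⟨hxΛ, hx⟩
    refine ⟨neg_mem hxΛ, fun v hv => ?_⟩
    obtain ⟨a, ha⟩ := hx v hv
    exact ⟨-a, by rw [neg_dotProduct, ha, Int.cast_neg]⟩

def diffSubgroup {n : ℕ} (M : AddSubmonoid (V n)) : AddSubgroup (V n) where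
  carrier := diffSet M
  add_mem' := by
    rintro _ _ ⟨a, ha, b, hb, rfl⟩ ⟨c, hc, d, hd, rfl⟩
    exact ⟨a + c, add_mem ha hc, b + d, add_mem hb hd, by abel⟩
  zero_mem' := ⟨0, zero_mem M, 0, zero_mem M, (sub_zero 0).symm⟩
  neg_mem' := by
    rintro _ ⟨a, ha, b, hb, rfl⟩
    exact ⟨b, hb, a, ha, neg_sub a b⟩

theorem mem_diffSubgroup_of_mem {n : ℕ} {M : AddSubmonoid (V n)} {x : V n} (hx : x ∈ M) :
    x ∈ diffSubgroup M :=
  ⟨x, hx, 0, zero_mem M, (sub_zero x).symm⟩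

theorem mem_dualCone_coneOf_closure {n : ℕ} {S : Set (V n)} {z : V n}
    (hz : ∀ s ∈ S, 0 ≤ s ⬝ᵥ z) : z ∈ dualCone (coneOf (AddSubmonoid.closure S : Set (V n))) := by
  have hM : ∀ x ∈ AddSubmonoid.closure S, 0 ≤ x ⬝ᵥ z := fun x hx => by
    induction hx using AddSubmonoid.closure_induction with
    | mem x hx => exact hz x hx
    | zero => rw [zero_dotProduct]
    | add x y _ _ hx hy => rw [add_dotProduct]; exact add_nonneg hx hy
  rintro _ ⟨k, c, v, hc, hv, rfl⟩
  rw [sum_dotProduct]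
  exact sum_nonneg fun i _ => by
    rw [smul_dotProduct, smul_eq_mul]
    exact mul_nonneg (hc i) (hM _ (hv i))

theorem IsPositive.zsmul_eq_zero_of_sum_eq_zero {n : ℕ} {M : AddSubmonoid (V n)}
    (hM : IsPositive (M : Set (V n))) {T : Finset (V n)} (hT : ∀ s ∈ T, s ∈ M) {c : V n → ℤ}
    (hc : ∀ s ∈ T, 0 ≤ c s) (hsum : ∑ s ∈ T, c s • s = 0) : ∀ s ∈ T, c s • s = 0 := by
  have hmem : ∀ s ∈ T, c s • s ∈ M := fun s hs => by
    lift c s to ℕ using hc s hs with k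
    rw [natCast_zsmul]
    exact nsmul_mem (hT s hs) k
  intro s hs
  rw [← add_sum_erase T _ hs] at hsum
  refine hM _ (hmem s hs) ?_
  rw [← eq_neg_of_add_eq_zero_right hsum]
  exact sum_mem fun j hj => hmem j (mem_of_mem_erase hj)

section NonnegIndependent

variable {κ ι R : Type*} [CommRing R] [LinearOrder R]

def NonnegIndependent (s : Finset κ) (t : κ → ι → R) : Prop :=
  ∀ c : κ → R, (∀ k ∈ s, 0 ≤ c k) → ∑ k ∈ s, c k • t k = 0 → ∀ k ∈ s, c k = 0

variable {s s' : Finset κ} {t : κ → ι → R}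

theorem NonnegIndependent.mono (h : NonnegIndependent s' t) (hss' : s ⊆ s') :
    NonnegIndependent s t := by
  classical
  intro c hc hsum k hk
  have := h (fun j => if j ∈ s then c j else 0)
    (fun j _ => by split_ifs with hj; exacts [hc j hj, le_rfl]) ?_ k (hss' hk)
  · simpa [hk] using this
  · simp only [ite_smul, zero_smul, sum_ite_mem, inter_eq_right.2 hss', hsum]

theorem NonnegIndependent.ne_zero [IsStrictOrderedRing R] (h : NonnegIndependent s t) {a : κ}
    (ha : a ∈ s) : t a ≠ 0 := by
  classical
  intro h0
  have := h (Pi.single a 1) (fun k _ => by rw [Pi.single_apply]; split_ifs <;> simp) ?_ a ha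
  · simp at this
  · simp [Pi.single_apply, ite_smul, h0]

theorem NonnegIndependent.smul_sub_smul_of_insert [IsStrictOrderedRing R] [Fintype ι]
    [DecidableEq κ] {a : κ} (h : NonnegIndependent (insert a s) t) (ha : a ∉ s) {y : ι → R}
    (hy : ∀ k ∈ s, 0 < t k ⬝ᵥ y) (hay : t a ⬝ᵥ y ≤ 0) :
    NonnegIndependent s fun k => (t k ⬝ᵥ y) • t a - (t a ⬝ᵥ y) • t k := by
  intro c hc hsum
  have hne : ∀ j ∈ s, j ≠ a := fun j hj => ne_of_mem_of_not_mem hj ha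
  -- `c'` is the given relation rewritten in terms of `t a` and the `t k`; it is nonnegative
  -- because `t a ⬝ᵥ y ≤ 0`
  set c' := Function.update (fun k => -(t a ⬝ᵥ y) * c k) a (∑ k ∈ s, c k * (t k ⬝ᵥ y))
  have hca := h c' ?_ ?_ a (mem_insert_self a s)
  · simp only [c', Function.update_self] at hca
    rw [sum_eq_zero_iff_of_nonneg fun k hk => mul_nonneg (hc k hk) (hy k hk).le] at hca
    exact fun k hk => (mul_eq_zero.1 (hca k hk)).resolve_right (hy k hk).ne'
  · intro j hj
    rcases mem_insert.1 hj with rfl | hj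
    · simp only [c', Function.update_self]
      exact sum_nonneg fun k hk => mul_nonneg (hc k hk) (hy k hk).le
    · simp only [c', Function.update_of_ne (hne j hj)]
      exact mul_nonneg (neg_nonneg.2 hay) (hc j hj)
  · rw [sum_insert ha, ← hsum]
    simp only [c', Function.update_self, smul_sub, sum_sub_distrib, smul_smul, sum_smul]
    rw [sub_eq_add_neg, ← sum_neg_distrib]
    congr 1
    exact sum_congr rfl fun k hk => by
      rw [Function.update_of_ne (hne k hk), neg_mul, neg_smul, mul_comm]

end NonnegIndependent

/-- Gordan's theorem over `ℤ`. -/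
theorem NonnegIndependent.exists_forall_dotProduct_pos {κ ι : Type*} [Fintype ι] {s : Finset κ}
    {t : κ → ι → ℤ} (ht : NonnegIndependent s t) : ∃ y : ι → ℤ, ∀ k ∈ s, 0 < t k ⬝ᵥ y := by
  classical
  induction s using Finset.induction_on generalizing t with
  | empty => exact ⟨0, by simp⟩
  | insert a s ha ih =>
    obtain ⟨y, hy⟩ := ih (ht.mono (subset_insert a s))
    by_cases hay : 0 < t a ⬝ᵥ y
    · exact ⟨y, (forall_mem_insert _ _ _).2 ⟨hay, hy⟩⟩
    push Not at hay
    obtain ⟨z, hz⟩ := ih (ht.smul_sub_smul_of_insert ha hy hay)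
    -- `(t a ⬝ᵥ z) • y - (t a ⬝ᵥ y) • z` is orthogonal to `t a` and positive on `s`
    set M := 1 + ∑ k ∈ s, |t k ⬝ᵥ t a|
    refine ⟨M • ((t a ⬝ᵥ z) • y - (t a ⬝ᵥ y) • z) + t a, (forall_mem_insert _ _ _).2 ⟨?_, ?_⟩⟩
    · have hsq : 0 < t a ⬝ᵥ t a := lt_of_le_of_ne (sum_nonneg fun i _ => mul_self_nonneg _)
        (Ne.symm (dotProduct_self_eq_zero.not.2 (ht.ne_zero (mem_insert_self a s))))
      simp only [dotProduct_add, dotProduct_smul, dotProduct_sub, smul_eq_mul]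
      linarith [mul_comm (t a ⬝ᵥ z) (t a ⬝ᵥ y)]
    · intro k hk
      have hzk : 1 ≤ (t a ⬝ᵥ z) * (t k ⬝ᵥ y) - (t a ⬝ᵥ y) * (t k ⬝ᵥ z) := by
        have := hz k hk
        simp only [sub_dotProduct, smul_dotProduct, smul_eq_mul] at this
        linarith [mul_comm (t a ⬝ᵥ z) (t k ⬝ᵥ y)]
      have hM : |t k ⬝ᵥ t a| < M :=
        lt_add_of_pos_of_le one_pos (single_le_sum (fun j _ => abs_nonneg (t j ⬝ᵥ t a)) hk)
      simp only [dotProduct_add, dotProduct_smul, dotProduct_sub, smul_eq_mul]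
      nlinarith [neg_abs_le (t k ⬝ᵥ t a),
        mul_le_mul_of_nonneg_left hzk ((abs_nonneg _).trans hM.le)]

theorem IsDiscreteSet.discreteTopology {n : ℕ} {Λ : Set (V n)} (h : IsDiscreteSet Λ) :
    DiscreteTopology Λ := by
  refine discreteTopology_iff_isOpen_singleton.2 fun x => Metric.isOpen_singleton_iff.2 ?_
  obtain ⟨ε, hε, hx⟩ := h x x.2
  exact ⟨ε, hε, fun y hy => Subtype.ext (hx y y.2 hy)⟩

theorem exists_dualLattice_coordinates {n : ℕ} (Λ : AddSubgroup (V n))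
    (hΛ : IsDiscreteSet (Λ : Set (V n))) :
    ∃ (r : ℕ) (u : Fin r → V n), (∀ i, u i ∈ dualLattice (Λ : Set (V n))) ∧
      ∀ v ∈ Λ, (∀ i, v ⬝ᵥ u i = 0) → v = 0 := by
  set W := Submodule.span ℝ (Λ : Set (V n))
  let L : Submodule ℤ W := Λ.toIntSubmodule.comap (W.subtype.restrictScalars ℤ)
  have : DiscreteTopology L := by
    have := hΛ.discreteTopology
    exact DiscreteTopology.preimage_of_continuous_injective (Λ : Set (V n))
      continuous_subtype_val Subtype.val_injective
  have : IsZLattice ℝ L := ⟨Submodule.span_span_coe_preimage⟩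
  let b := (Module.Free.chooseBasis ℤ L).reindex (Fintype.equivFin _)
  let e := b.ofZLatticeBasis ℝ L
  let B : LinearMap.BilinForm ℝ W := LinearMap.BilinForm.restrict (dotProductBilin ℝ ℝ) W
  have hB : B.Nondegenerate := ⟨fun x hx => Subtype.ext (dotProduct_self_eq_zero.1 (hx x)),
    fun x hx => Subtype.ext (dotProduct_self_eq_zero.1 (hx x))⟩
  -- `B.dualBasis hB d = e`, so the `d i` represent the coordinate functionals of `e`
  let d := B.flip.dualBasis hB.flip e
  have hd : ∀ (x : W) i, (x : V n) ⬝ᵥ d i = e.repr x i := fun x i => by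
    rw [← LinearMap.BilinForm.dualBasis_dualBasis_flip hB e,
      LinearMap.BilinForm.dualBasis_repr_apply]
    rfl
  refine ⟨_, fun i => d i, fun i => ⟨(d i).2, fun v hv =>
    ⟨b.repr ⟨⟨v, Submodule.subset_span hv⟩, hv⟩ i, ?_⟩⟩, fun v hv h0 => ?_⟩
  · exact (dotProduct_comm _ _).trans ((hd ⟨v, _⟩ i).trans
      (b.ofZLatticeBasis_repr_apply ℝ L ⟨⟨v, _⟩, hv⟩ i))
  · have : e.repr ⟨v, Submodule.subset_span hv⟩ = 0 := Finsupp.ext fun i => by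
      rw [← hd]; exact h0 i
    simpa using congrArg Subtype.val (e.repr.map_eq_zero_iff.1 this)

theorem exists_mem_dualLattice_one_le_dotProduct {n : ℕ} (M : AddSubmonoid (V n))
    (hpos : IsPositive (M : Set (V n))) (hdisc : IsDiscreteSet (diffSet (M : Set (V n))))
    (S : Finset (V n)) (hS : ∀ s ∈ S, s ∈ M) :
    ∃ u ∈ dualLattice (diffSet (M : Set (V n))), ∀ s ∈ S, s ≠ 0 → 1 ≤ s ⬝ᵥ u := by
  classical
  obtain ⟨r, u, hu, hinj⟩ := exists_dualLattice_coordinates (diffSubgroup M) hdisc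
  choose! m hm using fun s (hs : s ∈ S) i => (hu i).2 s (mem_diffSubgroup_of_mem (hS s hs))
  set T := S.filter (· ≠ 0)
  have hcoord : ∀ (c : V n → ℤ) i, (∑ s ∈ T, c s • s) ⬝ᵥ u i = ((∑ s ∈ T, c s • m s) i : ℤ) :=
    fun c i => by
      simp only [sum_dotProduct, Finset.sum_apply, Pi.smul_apply, smul_eq_mul, Int.cast_sum,
        Int.cast_mul]
      refine sum_congr rfl fun s hs => ?_
      rw [← hm s (mem_filter.1 hs).1 i, dotProduct_comm, ← Int.cast_smul_eq_zsmul ℝ,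
        dotProduct_smul, smul_eq_mul]
  have hT : NonnegIndependent T m := fun c hc hsum s hs => by
    have hzero : ∑ s ∈ T, c s • s = 0 := hinj _
      (sum_mem fun s hs => zsmul_mem (mem_diffSubgroup_of_mem (hS s (mem_filter.1 hs).1)) _)
      fun i => by rw [hcoord c i, hsum, Pi.zero_apply, Int.cast_zero]
    have := hpos.zsmul_eq_zero_of_sum_eq_zero (fun s hs => hS s (mem_filter.1 hs).1) hc hzero s hs
    exact (smul_eq_zero.1 this).resolve_right (mem_filter.1 hs).2
  obtain ⟨y, hy⟩ := hT.exists_forall_dotProduct_pos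
  refine ⟨∑ i, y i • u i, show _ ∈ dualLatticeSubgroup _ from
    sum_mem fun i _ => zsmul_mem (hu i) _, fun s hs hs0 => ?_⟩
  have hsy : s ⬝ᵥ ∑ i, y i • u i = ((m s ⬝ᵥ y : ℤ) : ℝ) := by
    rw [dotProduct_sum, dotProduct, Int.cast_sum]
    refine sum_congr rfl fun i _ => ?_
    rw [dotProduct_smul, dotProduct_comm, hm s hs i, zsmul_eq_mul, Int.cast_mul, mul_comm]
  rw [hsy]
  exact_mod_cast hy s (mem_filter.2 ⟨hs, hs0⟩)

theorem dotProduct_add_nsmul_nonneg {n : ℕ} {s u x : V n} {N : ℕ}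
    (hu : s ≠ 0 → 1 ≤ s ⬝ᵥ u) (hx : |s ⬝ᵥ x| ≤ N) : 0 ≤ s ⬝ᵥ (x + N • u) := by
  rw [dotProduct_add, dotProduct_smul, nsmul_eq_mul]
  rcases eq_or_ne s 0 with rfl | hs
  · simp
  nlinarith [neg_le_of_abs_le hx, hu hs]

/-- For a positive affine semigroup `Γ ⊆ ℝ^n`, the lattice generated by the
dual semigroup equals the dual lattice of `Λ_Γ`: `Λ_{Γ*} = (Λ_Γ)*`. -/
theorem diffSet_dualSemigroup_eq_dualLattice {n : ℕ} (Γ : Set (V n))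
    (hΓ : IsAffineSemigroup Γ) (hpos : IsPositive Γ) :
    diffSet (dualSemigroup Γ) = dualLattice (diffSet Γ) := by
  obtain ⟨⟨S, rfl⟩, hdisc⟩ := hΓ
  ext w
  refine ⟨fun ⟨x, hx, y, hy, hw⟩ => hw ▸ (dualLatticeSubgroup _).sub_mem hx.1 hy.1,
    fun hw => ?_⟩
  obtain ⟨u, hu, hu1⟩ := exists_mem_dualLattice_one_le_dotProduct _ hpos hdisc S
    fun s hs => AddSubmonoid.subset_closure hs
  obtain ⟨N, hN⟩ := exists_nat_ge (∑ s ∈ S, |s ⬝ᵥ w|)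
  have hNu : N • u ∈ dualLattice (diffSet _) := (dualLatticeSubgroup _).nsmul_mem hu N
  refine ⟨w + N • u, ⟨(dualLatticeSubgroup _).add_mem hw hNu,
    mem_dualCone_coneOf_closure fun s hs => ?_⟩,
    N • u, ⟨hNu, mem_dualCone_coneOf_closure fun s hs => ?_⟩, (add_sub_cancel_right w _).symm⟩
  · exact dotProduct_add_nsmul_nonneg (hu1 s hs)
      ((single_le_sum (fun s _ => abs_nonneg (s ⬝ᵥ w)) hs).trans hN)
  · simpa using dotProduct_add_nsmul_nonneg (x := 0) (hu1 s hs) (by simp)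

end
end

section
/- Let Γ ⊆ ℝ^n be a positive affine semigroup with minimal generating set a₁,…,a_k, let b₁,…,b_l be the minimal generating set of Γ*, and let S ∈ ℤ₊^{k×l} be the slack matrix of Γ. Then the map φ sending Σᵢ nᵢ aᵢ to Σᵢ nᵢ Sᵢ (where Sᵢ is the i-th row of S and nᵢ ∈ ℤ₊) is a well-defined additive monoid isomorphism from Γ onto Γ_S^row; analogously, the map sending Σⱼ mⱼ bⱼ to Σⱼ mⱼ (j-th column of S) is a well-defined additive monoid isomorphism from Γ* onto Γ_S^col. -/
open Matrix BigOperators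

noncomputable section

/-!
Both maps are restrictions of the linear maps `x ↦ (⟨x, b j⟩)ⱼ` and `y ↦ (⟨a i, y⟩)ᵢ`, which send
the generators to the rows, resp. columns, of `S`; the content is injectivity.

On `Γ*` this is immediate: `Γ* ⊆ span Λ_Γ`, and a difference pairing to zero with every `a i` is
orthogonal to that span. On `Γ` one needs that `Γ*` separates the points of `span Λ_Γ`. First, the
cone of `Γ` is pointed: a convex relation `∑ wᵢ zᵢ = 0` among nonzero `zᵢ ∈ Γ` yields the bounded
sequence `∑ ⌊N wᵢ⌋ zᵢ` in `Γ`, and discreteness of `Λ_Γ` forces two far apart terms to coincide,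
which gives an integral relation contradicting positivity. Hahn–Banach then gives a functional
positive on every `a i`. As `Λ_Γ` is a lattice in its span, so is the dual lattice, and it meets
the open cone of such functionals in some `l`. For every `u ∈ Λ_Γ*` and large `N`, `N • l + u` lies
in `Γ*`, so the pairings with `Γ*` determine those with `Λ_Γ*`, which spans `span Λ_Γ`.
-/

namespace AffineSemigroup

variable {n : ℕ}

section Generators

variable {ι : Type*}

theorem mem_closure_range_iff [Fintype ι] {a : ι → V n} {x : V n} :
    x ∈ AddSubmonoid.closure (Set.range a) ↔ ∃ c : ι → ℕ, x = ∑ i, (c i : ℝ) • a i := by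
  simp only [AddSubmonoid.mem_closure_range_iff_of_fintype, Nat.cast_smul_eq_nsmul]

theorem dotProduct_eq_of_mem_closure {a : ι → V n} {y y' : V n}
    (h : ∀ i, a i ⬝ᵥ y = a i ⬝ᵥ y') {x : V n} (hx : x ∈ AddSubmonoid.closure (Set.range a)) :
    x ⬝ᵥ y = x ⬝ᵥ y' := by
  induction hx using AddSubmonoid.closure_induction with
  | mem x hx => obtain ⟨i, rfl⟩ := hx; exact h i
  | zero => simp
  | add x x' _ _ hx hx' => simp only [add_dotProduct, hx, hx']

theorem dotProduct_nonneg_of_mem_closure {a : ι → V n} {y : V n} (h : ∀ i, 0 ≤ a i ⬝ᵥ y)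
    {x : V n} (hx : x ∈ AddSubmonoid.closure (Set.range a)) : 0 ≤ x ⬝ᵥ y := by
  induction hx using AddSubmonoid.closure_induction with
  | mem x hx => obtain ⟨i, rfl⟩ := hx; exact h i
  | zero => simp
  | add x x' _ _ hx hx' => rw [add_dotProduct]; exact add_nonneg hx hx'

theorem IsMinGenSet.zero_notMem {A Γ : Set (V n)} (h : IsMinGenSet A Γ) : (0 : V n) ∉ A := by
  intro h0
  refine h.2 (A \ {0}) (Set.sdiff_singleton_ssubset.2 h0) ?_
  rw [IsGenSet, ← h.1]
  congr 1
  refine le_antisymm (AddSubmonoid.closure_mono Set.sdiff_subset) (AddSubmonoid.closure_le.2 ?_)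
  intro x hx
  by_cases hx0 : x = 0
  · subst hx0; exact zero_mem _
  · exact AddSubmonoid.subset_closure ⟨hx, hx0⟩

end Generators

section Pointed

variable {ι : Type*} [Fintype ι]

theorem exists_add_le_apply_eq {X : Type*} [PseudoMetricSpace X] [ProperSpace X] {g : ℕ → X}
    (hg : Bornology.IsBounded (Set.range g)) {ε : ℝ} (hε : 0 < ε)
    (hsep : ∀ m m', dist (g m) (g m') < ε → g m = g m') (B : ℕ) :
    ∃ N N', N + B ≤ N' ∧ g N' = g N := by
  obtain ⟨_, -, φ, hφ, hlim⟩ := tendsto_subseq_of_bounded hg (Set.mem_range_self (f := g))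
  obtain ⟨K, hK⟩ := Metric.cauchySeq_iff'.mp hlim.cauchySeq ε hε
  exact ⟨φ K, φ (B + K), by linarith [hφ.add_le_nat B K], hsep _ _ (hK _ (by omega))⟩

theorem isBounded_range_sum_floor_smul {E : Type*} [NormedAddCommGroup E] [NormedSpace ℝ E]
    {z : ι → E} {w : ι → ℝ} (hw : ∀ i, 0 ≤ w i) (hsum : ∑ i, w i • z i = 0) :
    Bornology.IsBounded (Set.range fun N : ℕ => ∑ i, (⌊N * w i⌋₊ : ℝ) • z i) := by
  refine isBounded_iff_forall_norm_le.2 ⟨∑ i, ‖z i‖, Set.forall_mem_range.2 fun N => ?_⟩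
  have hshift : ∑ i, (⌊N * w i⌋₊ : ℝ) • z i = ∑ i, ((⌊N * w i⌋₊ : ℝ) - N * w i) • z i := by
    simp only [sub_smul, Finset.sum_sub_distrib, mul_smul, ← Finset.smul_sum, hsum, smul_zero,
      sub_zero]
  rw [hshift]
  refine (norm_sum_le _ _).trans (Finset.sum_le_sum fun i _ => ?_)
  rw [norm_smul]
  refine mul_le_of_le_one_left (norm_nonneg _) ?_
  have hN : 0 ≤ (N : ℝ) * w i := mul_nonneg N.cast_nonneg (hw i)
  rw [Real.norm_eq_abs, abs_le]
  constructor <;> linarith [Nat.floor_le hN, Nat.sub_one_lt_floor ((N : ℝ) * w i)]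

theorem exists_nat_relation {M : AddSubmonoid (V n)}
    (hdisc : IsDiscreteSet (diffSet (M : Set (V n))))
    {z : ι → V n} (hz : ∀ i, z i ∈ M) {w : ι → ℝ} (hw : ∀ i, 0 ≤ w i)
    (hsum : ∑ i, w i • z i = 0) {i₀ : ι} (hi₀ : 0 < w i₀) :
    ∃ d : ι → ℕ, d i₀ ≠ 0 ∧ ∑ i, (d i : ℝ) • z i = 0 := by
  set g : ℕ → V n := fun N => ∑ i, (⌊N * w i⌋₊ : ℝ) • z i
  have hgM : ∀ N, g N ∈ M := fun N =>
    M.sum_mem fun i _ => by rw [Nat.cast_smul_eq_nsmul]; exact M.nsmul_mem (hz i) _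
  obtain ⟨ε, hε, hiso⟩ := hdisc 0 ⟨0, M.zero_mem, 0, M.zero_mem, (sub_zero 0).symm⟩
  have hsep : ∀ m m', dist (g m) (g m') < ε → g m = g m' := fun m m' h =>
    sub_eq_zero.1 (hiso _ ⟨_, hgM m, _, hgM m', rfl⟩ (by rwa [dist_zero_right, ← dist_eq_norm]))
  obtain ⟨N, N', hNN', hgN⟩ := exists_add_le_apply_eq (isBounded_range_sum_floor_smul hw hsum) hε
    hsep ⌈(w i₀)⁻¹⌉₊
  have hmono : ∀ i, ⌊N * w i⌋₊ ≤ ⌊N' * w i⌋₊ := fun i =>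
    Nat.floor_le_floor (mul_le_mul_of_nonneg_right (by exact_mod_cast (by omega : N ≤ N')) (hw i))
  refine ⟨fun i => ⌊N' * w i⌋₊ - ⌊N * w i⌋₊, ?_, ?_⟩
  · have hgap : (N : ℝ) * w i₀ + 1 ≤ N' * w i₀ := by
      have h1 : (1 : ℝ) ≤ ⌈(w i₀)⁻¹⌉₊ * w i₀ := by
        rw [← inv_mul_cancel₀ hi₀.ne']
        exact mul_le_mul_of_nonneg_right (Nat.le_ceil _) hi₀.le
      have h2 : ((N + ⌈(w i₀)⁻¹⌉₊ : ℕ) : ℝ) ≤ N' := by exact_mod_cast hNN'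
      push_cast at h2
      nlinarith
    have := Nat.floor_le_floor hgap
    rw [Nat.floor_add_one (mul_nonneg N.cast_nonneg (hw i₀))] at this
    dsimp only
    omega
  · simp only [Nat.cast_sub (hmono _), sub_smul, Finset.sum_sub_distrib]
    exact sub_eq_zero.2 hgN

theorem IsPositive.eq_zero_of_sum_smul_eq_zero {M : AddSubmonoid (V n)}
    (hpos : IsPositive (M : Set (V n))) {z : ι → V n} (hz : ∀ i, z i ∈ M) {d : ι → ℕ}
    (hd : ∑ i, (d i : ℝ) • z i = 0) {i₀ : ι} (hi₀ : d i₀ ≠ 0) : z i₀ = 0 := by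
  classical
  have hmem : ∀ s : Finset ι, ∑ i ∈ s, (d i : ℝ) • z i ∈ M := fun s =>
    M.sum_mem fun i _ => by rw [Nat.cast_smul_eq_nsmul]; exact M.nsmul_mem (hz i) _
  rw [← Finset.add_sum_erase _ _ (Finset.mem_univ i₀)] at hd
  have h0 := hpos _ (by simpa using hmem {i₀})
    (by rw [neg_eq_of_add_eq_zero_right hd]; exact hmem _)
  exact (smul_eq_zero.1 h0).resolve_left (by exact_mod_cast hi₀)

theorem zero_notMem_convexHull {M : AddSubmonoid (V n)}
    (hdisc : IsDiscreteSet (diffSet (M : Set (V n)))) (hpos : IsPositive (M : Set (V n))) :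
    (0 : V n) ∉ convexHull ℝ ((M : Set (V n)) \ {0}) := by
  intro h
  obtain ⟨κ, _, w, z, hw, hw1, hz, hsum⟩ := mem_convexHull_iff_exists_fintype.1 h
  obtain ⟨i₀, hi₀⟩ : ∃ i, 0 < w i := by
    by_contra! hw0
    linarith [Finset.sum_nonpos fun i (_ : i ∈ Finset.univ) => hw0 i]
  obtain ⟨d, hd, hrel⟩ := exists_nat_relation hdisc (fun i => (hz i).1) hw hsum hi₀
  exact (hz i₀).2 (IsPositive.eq_zero_of_sum_smul_eq_zero hpos (fun i => (hz i).1) hrel hd)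

theorem exists_strongDual_pos {M : AddSubmonoid (V n)}
    (hdisc : IsDiscreteSet (diffSet (M : Set (V n)))) (hpos : IsPositive (M : Set (V n)))
    {a : ι → V n} (ha : ∀ i, a i ∈ M) (ha0 : ∀ i, a i ≠ 0) :
    ∃ f : StrongDual ℝ (V n), ∀ i, 0 < f (a i) := by
  have h0 : (0 : V n) ∉ convexHull ℝ (Set.range a) := fun h =>
    zero_notMem_convexHull hdisc hpos
      (convexHull_mono (Set.range_subset_iff.2 fun i =>
        show a i ∈ (M : Set (V n)) \ {0} from ⟨ha i, ha0 i⟩) h)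
  obtain ⟨f, u, hf0, hfu⟩ := geometric_hahn_banach_point_closed (convex_convexHull ℝ _)
    ((Set.finite_range a).isCompact_convexHull ℝ).isClosed h0
  exact ⟨f, fun i => by simpa using hf0.trans (hfu _ (subset_convexHull ℝ _ ⟨i, rfl⟩))⟩

end Pointed

section DualLattice

variable (M : AddSubmonoid (V n))

def diffSubgroup : AddSubgroup (V n) where
  carrier := diffSet M
  add_mem' := by
    rintro _ _ ⟨x, hx, y, hy, rfl⟩ ⟨x', hx', y', hy', rfl⟩
    exact ⟨x + x', M.add_mem hx hx', y + y', M.add_mem hy hy', by abel⟩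
  zero_mem' := ⟨0, M.zero_mem, 0, M.zero_mem, (sub_zero 0).symm⟩
  neg_mem' := by
    rintro _ ⟨x, hx, y, hy, rfl⟩
    exact ⟨y, hy, x, hx, neg_sub x y⟩

abbrev diffSpan : Submodule ℝ (V n) := Submodule.span ℝ (diffSet (M : Set (V n)))

/-- `Λ_Γ` as a `ℤ`-submodule of the real vector space it spans. -/
def diffLattice : Submodule ℤ (diffSpan M) :=
  (diffSubgroup M).toIntSubmodule.comap ((diffSpan M).subtype.restrictScalars ℤ)

theorem discreteTopology_diffLattice (hdisc : IsDiscreteSet (diffSet (M : Set (V n)))) :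
    DiscreteTopology (diffLattice M) := by
  refine discreteTopology_iff_isOpen_singleton.2 fun x => Metric.isOpen_singleton_iff.2 ?_
  obtain ⟨ε, hε, hiso⟩ := hdisc _ x.2
  exact ⟨ε, hε, fun y hy => Subtype.ext (Subtype.ext (hiso _ y.2 hy))⟩

instance [DiscreteTopology (diffLattice M)] : IsZLattice ℝ (diffLattice M) :=
  ⟨Submodule.span_span_coe_preimage⟩

def dotForm (W : Submodule ℝ (V n)) : LinearMap.BilinForm ℝ W :=
  (dotProductBilin ℝ ℝ).compl₁₂ W.subtype W.subtype

theorem dotForm_apply {W : Submodule ℝ (V n)} (x y : W) :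
    dotForm W x y = (x : V n) ⬝ᵥ (y : V n) := rfl

theorem dotForm_nondegenerate (W : Submodule ℝ (V n)) : (dotForm W).Nondegenerate :=
  ⟨fun x hx => Subtype.ext (dotProduct_self_eq_zero.1 (hx x)),
    fun y hy => Subtype.ext (dotProduct_self_eq_zero.1 (hy y))⟩

theorem exists_basis_span_int_subset_dualLattice
    (hdisc : IsDiscreteSet (diffSet (M : Set (V n)))) :
    ∃ (κ : Type) (_ : Fintype κ) (d : Module.Basis κ ℝ (diffSpan M)),
      ∀ u ∈ Submodule.span ℤ (Set.range d), (u : V n) ∈ dualLattice (diffSet (M : Set (V n))) := by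
  classical
  have := discreteTopology_diffLattice M hdisc
  have := ZLattice.module_finite ℝ (diffLattice M)
  have := ZLattice.module_free ℝ (diffLattice M)
  set bZ := Module.Free.chooseBasis ℤ (diffLattice M)
  refine ⟨_, inferInstance, (dotForm _).dualBasis (dotForm_nondegenerate _) (bZ.ofZLatticeBasis ℝ),
    fun u hu => ⟨u.2, fun v hv => ?_⟩⟩
  rw [← LinearMap.BilinForm.dualSubmodule_span_of_basis, Module.Basis.ofZLatticeBasis_span] at hu
  obtain ⟨m, hm⟩ := Submodule.mem_one.1 (hu ⟨v, Submodule.subset_span hv⟩ hv)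
  rw [algebraMap_int_eq, eq_intCast] at hm
  exact ⟨m, hm.symm⟩

end DualLattice

section Separation

variable {ι : Type*} {Γ : Set (V n)} {a : ι → V n}

theorem exists_mem_span_int_of_isOpen_cone [Fintype ι] {E : Type*} [NormedAddCommGroup E]
    [NormedSpace ℝ E] (b : Module.Basis ι ℝ E) {U : Set E} (hU : IsOpen U)
    (hcone : ∀ c : ℝ, 0 < c → ∀ x ∈ U, c • x ∈ U) (hne : U.Nonempty) :
    ∃ l ∈ Submodule.span ℤ (Set.range b), l ∈ U := by
  obtain ⟨x, hx⟩ := hne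
  obtain ⟨δ, hδ, hball⟩ := Metric.isOpen_iff.1 hU x hx
  set R := ∑ i, ‖b i‖
  have hR : 0 ≤ R := Finset.sum_nonneg fun i _ => norm_nonneg _
  set D : ℝ := (R + 1) / δ
  have hD : 0 < D := by positivity
  set l := ZSpan.floor b (D • x)
  -- `D⁻¹ • l` lies within `R / D < δ` of `x`, since `D • x - l` is the fractional part
  have hnear : D⁻¹ • (l : E) ∈ U := by
    refine hball ?_
    have hfract : D⁻¹ • (l : E) - x = -(D⁻¹ • ZSpan.fract b (D • x)) := by
      rw [ZSpan.fract_apply, smul_sub, inv_smul_smul₀ hD.ne']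
      abel
    rw [Metric.mem_ball, dist_eq_norm, hfract, norm_neg, norm_smul, Real.norm_eq_abs,
      abs_of_pos (inv_pos.2 hD), inv_mul_lt_iff₀ hD]
    calc ‖ZSpan.fract b (D • x)‖ ≤ R := ZSpan.norm_fract_le b _
      _ < D * δ := by rw [div_mul_cancel₀ _ hδ.ne']; linarith
  exact ⟨l, l.2, by simpa [smul_smul, hD.ne'] using hcone D hD _ hnear⟩

theorem exists_mem_span_int_dotProduct_pos [Fintype ι] {W : Submodule ℝ (V n)} {κ : Type*}
    [Fintype κ] (d : Module.Basis κ ℝ W) (haW : ∀ i, a i ∈ W) {f : StrongDual ℝ (V n)}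
    (hf : ∀ i, 0 < f (a i)) :
    ∃ l ∈ Submodule.span ℤ (Set.range d), ∀ i, 0 < a i ⬝ᵥ (l : V n) := by
  refine exists_mem_span_int_of_isOpen_cone (U := {w : W | ∀ i, 0 < a i ⬝ᵥ (w : V n)}) d ?_ ?_ ?_
  · rw [Set.ofPred_forall]
    exact isOpen_iInter_of_finite fun i =>
      isOpen_lt continuous_const (continuous_const.dotProduct continuous_subtype_val)
  · intro c hc w hw i
    rw [Submodule.coe_smul, dotProduct_smul, smul_eq_mul]
    exact mul_pos hc (hw i)
  · refine ⟨((dotForm W).toDual (dotForm_nondegenerate W)).symm ((f : V n →ₗ[ℝ] ℝ) ∘ₗ W.subtype),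
      fun i => ?_⟩
    rw [dotProduct_comm, ← dotForm_apply (y := ⟨a i, haW i⟩),
      LinearMap.BilinForm.apply_toDual_symm_apply]
    exact hf i

theorem mem_dualSemigroup_of_dotProduct_nonneg (hgen : IsGenSet (Set.range a) Γ) {v : V n}
    (hv : v ∈ dualLattice (diffSet Γ)) (hnn : ∀ i, 0 ≤ a i ⬝ᵥ v) : v ∈ dualSemigroup Γ := by
  obtain rfl := hgen
  refine ⟨hv, ?_⟩
  rintro _ ⟨m, c, x, hc, hx, rfl⟩
  rw [sum_dotProduct]
  exact Finset.sum_nonneg fun j _ => by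
    rw [smul_dotProduct]; exact mul_nonneg (hc j) (dotProduct_nonneg_of_mem_closure hnn (hx j))

theorem exists_nsmul_add_mem_dualSemigroup [Fintype ι] (hgen : IsGenSet (Set.range a) Γ)
    {l u : V n} (hl : ∀ i, 0 < a i ⬝ᵥ l) (hmem : ∀ N : ℕ, N • l + u ∈ dualLattice (diffSet Γ)) :
    ∃ N : ℕ, N • l + u ∈ dualSemigroup Γ := by
  have hlarge : ∀ i, ∀ᶠ N : ℕ in Filter.atTop, 0 ≤ a i ⬝ᵥ (N • l + u) := fun i => by
    simp_rw [dotProduct_add, dotProduct_smul, nsmul_eq_mul]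
    exact (Filter.tendsto_atTop_add_const_right _ _
      (tendsto_natCast_atTop_atTop.atTop_mul_const (hl i))).eventually_ge_atTop 0
  obtain ⟨N, hN⟩ := (Filter.eventually_all.2 hlarge).exists
  exact ⟨N, mem_dualSemigroup_of_dotProduct_nonneg hgen (hmem N) hN⟩

theorem eq_of_forall_dotProduct_eq_of_mem_span {s : Set (V n)} {y y' : V n}
    (hy : y ∈ Submodule.span ℝ s) (hy' : y' ∈ Submodule.span ℝ s)
    (h : ∀ v ∈ s, v ⬝ᵥ y = v ⬝ᵥ y') : y = y' := by
  have horth : ∀ v ∈ Submodule.span ℝ s, v ⬝ᵥ (y - y') = 0 := fun v hv => by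
    induction hv using Submodule.span_induction with
    | mem v hv => rw [dotProduct_sub, h v hv, sub_self]
    | zero => exact zero_dotProduct _
    | add v v' _ _ hv hv' => rw [add_dotProduct, hv, hv', add_zero]
    | smul c v _ hv => rw [smul_dotProduct, hv, smul_zero]
  exact sub_eq_zero.1 (dotProduct_self_eq_zero.1 (horth _ (sub_mem hy hy')))

theorem eq_of_forall_mem_dualSemigroup_dotProduct_eq [Fintype ι]
    (hdisc : IsDiscreteSet (diffSet Γ)) (hpos : IsPositive Γ) (hgen : IsGenSet (Set.range a) Γ)
    (ha0 : ∀ i, a i ≠ 0) {x y : V n} (hx : x ∈ Γ) (hy : y ∈ Γ)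
    (h : ∀ γ ∈ dualSemigroup Γ, x ⬝ᵥ γ = y ⬝ᵥ γ) : x = y := by
  obtain rfl := hgen
  set M := AddSubmonoid.closure (Set.range a)
  have hMW : ∀ z ∈ M, z ∈ diffSpan M := fun z hz =>
    Submodule.subset_span ⟨z, hz, 0, M.zero_mem, (sub_zero z).symm⟩
  have haM : ∀ i, a i ∈ M := fun i => AddSubmonoid.subset_closure ⟨i, rfl⟩
  obtain ⟨f, hf⟩ := exists_strongDual_pos hdisc hpos haM ha0
  obtain ⟨κ, _, d, hd⟩ := exists_basis_span_int_subset_dualLattice M hdisc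
  obtain ⟨l, hlZ, hl⟩ := exists_mem_span_int_dotProduct_pos d (fun i => hMW _ (haM i)) hf
  have hl' : (l : V n) ∈ dualSemigroup (M : Set (V n)) :=
    mem_dualSemigroup_of_dotProduct_nonneg rfl (hd _ hlZ) fun i => (hl i).le
  have hlat : ∀ u ∈ Submodule.span ℤ (Set.range d), x ⬝ᵥ (u : V n) = y ⬝ᵥ u := by
    intro u hu
    obtain ⟨N, hN⟩ := exists_nsmul_add_mem_dualSemigroup rfl hl (u := u) fun N => by
      simpa using hd _ (add_mem (Submodule.smul_mem _ (N : ℤ) hlZ) hu)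
    have := h _ hN
    rw [dotProduct_add, dotProduct_add, dotProduct_smul, dotProduct_smul, h _ hl'] at this
    exact add_left_cancel this
  set z : diffSpan M := ⟨x - y, sub_mem (hMW x hx) (hMW y hy)⟩
  have hz : dotForm _ z = 0 := d.ext fun t => by
    rw [dotForm_apply, sub_dotProduct, hlat _ (Submodule.subset_span ⟨t, rfl⟩), sub_self]; rfl
  exact sub_eq_zero.1 (congrArg Subtype.val
    ((dotForm_nondegenerate _).1 z fun w => by rw [hz]; rfl))

theorem eq_of_mem_dualLattice_of_dotProduct_eq (hgen : IsGenSet (Set.range a) Γ) {y y' : V n}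
    (hy : y ∈ dualLattice (diffSet Γ)) (hy' : y' ∈ dualLattice (diffSet Γ))
    (h : ∀ i, a i ⬝ᵥ y = a i ⬝ᵥ y') : y = y' := by
  obtain rfl := hgen
  refine eq_of_forall_dotProduct_eq_of_mem_span hy.1 hy'.1 ?_
  rintro _ ⟨x, hx, x', hx', rfl⟩
  rw [sub_dotProduct, sub_dotProduct, dotProduct_eq_of_mem_closure h hx,
    dotProduct_eq_of_mem_closure h hx']

theorem bijOn_of_isGenSet [Fintype ι] {m : ℕ} (F : V n →ₗ[ℝ] V m) {v : ι → V m}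
    (hv : ∀ i, F (a i) = v i) (hgen : IsGenSet (Set.range a) Γ) (hinj : Set.InjOn F Γ) :
    Set.BijOn F Γ {z | ∃ c : ι → ℕ, z = ∑ i, (c i : ℝ) • v i} := by
  obtain rfl := hgen
  have himg : ∀ c : ι → ℕ, F (∑ i, (c i : ℝ) • a i) = ∑ i, (c i : ℝ) • v i := fun c => by
    simp only [map_sum, map_smul, hv]
  refine ⟨fun x hx => ?_, hinj, ?_⟩
  · obtain ⟨c, rfl⟩ := mem_closure_range_iff.1 hx
    exact ⟨c, himg c⟩
  · rintro _ ⟨c, rfl⟩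
    exact ⟨_, mem_closure_range_iff.2 ⟨c, rfl⟩, himg c⟩

end Separation

end AffineSemigroup

open AffineSemigroup

theorem slack_row_col_isomorphisms_general {n k l : ℕ} (Γ : Set (V n))
    (hΓ : IsAffineSemigroup Γ) (hpos : IsPositive Γ)
    (a : Fin k → V n) (b : Fin l → V n) (S : Matrix (Fin k) (Fin l) ℤ)
    (hagen : IsMinGenSet (Set.range a) Γ)
    (hbgen : IsMinGenSet (Set.range b) (dualSemigroup Γ))
    (hSab : ∀ i j, (S i j : ℝ) = a i ⬝ᵥ b j) :
    (∃ φ : V n → V l,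
      (∀ c : Fin k → ℕ, φ (∑ i, (c i : ℝ) • a i) = ∑ i, (c i : ℝ) • rowVec S i) ∧
      Set.BijOn φ Γ (GammaRow S) ∧
      (∀ x ∈ Γ, ∀ y ∈ Γ, φ (x + y) = φ x + φ y) ∧ φ 0 = 0) ∧
    (∃ ψ : V n → V k,
      (∀ c : Fin l → ℕ, ψ (∑ j, (c j : ℝ) • b j) = ∑ j, (c j : ℝ) • colVec S j) ∧
      Set.BijOn ψ (dualSemigroup Γ) (GammaCol S) ∧
      (∀ x ∈ dualSemigroup Γ, ∀ y ∈ dualSemigroup Γ, ψ (x + y) = ψ x + ψ y) ∧ ψ 0 = 0) := by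
  have ha0 : ∀ i, a i ≠ 0 := fun i hi => IsMinGenSet.zero_notMem hagen ⟨i, hi⟩
  set φ := (Matrix.of b).mulVecLin
  set ψ := (Matrix.of a).mulVecLin
  have hφ : ∀ i, φ (a i) = rowVec S i := fun i => funext fun j => by
    simp [φ, rowVec, hSab, mulVec, dotProduct_comm]
  have hψ : ∀ j, ψ (b j) = colVec S j := fun j => funext fun i => by
    simp [ψ, colVec, hSab, mulVec]
  refine ⟨⟨φ, fun c => by simp [map_sum, hφ], bijOn_of_isGenSet φ hφ hagen.1 ?_,
      fun x _ y _ => map_add φ x y, map_zero φ⟩,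
    ⟨ψ, fun c => by simp [map_sum, hψ], bijOn_of_isGenSet ψ hψ hbgen.1 ?_,
      fun x _ y _ => map_add ψ x y, map_zero ψ⟩⟩
  · intro x hx y hy hxy
    refine eq_of_forall_mem_dualSemigroup_dotProduct_eq hΓ.2 hpos hagen.1 ha0 hx hy fun γ hγ => ?_
    rw [← hbgen.1] at hγ
    rw [dotProduct_comm, dotProduct_comm y]
    exact dotProduct_eq_of_mem_closure (fun j => congrFun hxy j) hγ
  · intro y hy y' hy' hyy
    exact eq_of_mem_dualLattice_of_dotProduct_eq hagen.1 hy.1 hy'.1 fun i => congrFun hyy i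

/-- Let `Γ` be a positive affine semigroup with minimal generating set
`a₁,…,a_k`, let `b₁,…,b_l` be the minimal generating set of `Γ*`, and `S` the slack
matrix. Then the map sending `Σ nᵢ aᵢ ↦ Σ nᵢ Sᵢ` (rows of `S`) is a well-defined
additive monoid isomorphism of `Γ` onto `Γ_S^row`, and analogously the column map is a
well-defined additive monoid isomorphism of `Γ*` onto `Γ_S^col`. -/
theorem slack_row_col_isomorphisms {n k l : ℕ} (Γ : Set (V n))
    (hΓ : IsAffineSemigroup Γ) (hpos : IsPositive Γ)
    (a : Fin k → V n) (b : Fin l → V n) (S : Matrix (Fin k) (Fin l) ℤ)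
    (ha : Function.Injective a) (hb : Function.Injective b)
    (hagen : IsMinGenSet (Set.range a) Γ)
    (hbgen : IsMinGenSet (Set.range b) (dualSemigroup Γ))
    (hSab : ∀ i j, (S i j : ℝ) = a i ⬝ᵥ b j) :
    (∃ φ : V n → V l,
      (∀ c : Fin k → ℕ, φ (∑ i, (c i : ℝ) • a i) = ∑ i, (c i : ℝ) • rowVec S i) ∧
      Set.BijOn φ Γ (GammaRow S) ∧
      (∀ x ∈ Γ, ∀ y ∈ Γ, φ (x + y) = φ x + φ y) ∧ φ 0 = 0) ∧
    (∃ ψ : V n → V k,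
      (∀ c : Fin l → ℕ, ψ (∑ j, (c j : ℝ) • b j) = ∑ j, (c j : ℝ) • colVec S j) ∧
      Set.BijOn ψ (dualSemigroup Γ) (GammaCol S) ∧
      (∀ x ∈ dualSemigroup Γ, ∀ y ∈ dualSemigroup Γ, ψ (x + y) = ψ x + ψ y) ∧ ψ 0 = 0) :=
  slack_row_col_isomorphisms_general Γ hΓ hpos a b S hagen hbgen hSab
end
end

section
/- Let Γ be a positive affine semigroup with slack matrix S ∈ ℤ₊^{k×l}. Then the lattice generated by the rows of S satisfies Λ_S^row = ℤ^l ∩ Row(S), and the lattice generated by the columns of S satisfies Λ_S^col = ℤ^k ∩ Col(S). -/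
open Matrix BigOperators

noncomputable section

/-!
Let `Λ` be the lattice spanned by `Γ` and `Λ*` its dual lattice. Since `Γ` is positive and its
generators have integer coordinates in a basis of `Λ`, an integral form of Gordan's theorem gives
`u ∈ Γ*` with `⟨a, u⟩ ≥ 1` for every generator `a` of `Γ`. Every `w ∈ Λ*` is then the difference
`(w + N u) - N u` of two elements of `Γ*` for `N` large, so the generators `b_j` of `Γ*` span `Λ*`
over `ℤ`.

An integer vector of `Col(S)` is `(⟨a_i, w⟩)_i` with `w` in the real span of the `b_j`; the
integrality of these pairings says `w ∈ Λ*`, so `w` is an integer combination of the `b_j`. An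
integer vector of `Row(S)` is `(⟨v, b_j⟩)_j` with `v` in the real span of the `a_i`; then `v`
pairs integrally with all of `Λ*`, hence lies in `Λ** = Λ`.
-/

open Set Submodule

section Gordan

variable {κ ι : Type*} [Fintype κ]

lemma sum_natFloor_smul_mem_Icc (m : κ → ι → ℤ) {w : κ → ℝ} (hw : ∀ i, 0 ≤ w i)
    (hrel : ∀ t, ∑ i, w i * m i t = 0) (N : ℕ) :
    ∑ i, ⌊N * w i⌋₊ • m i ∈ Icc (fun t => -∑ i, |m i t|) (fun t => ∑ i, |m i t|) := by
  suffices h : ∀ t, |((∑ i, ⌊N * w i⌋₊ • m i) t : ℝ)| ≤ ∑ i, |(m i t : ℝ)| by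
    exact ⟨fun t => neg_le_of_abs_le (by exact_mod_cast h t),
      fun t => le_of_abs_le (by exact_mod_cast h t)⟩
  intro t
  -- The sum differs from `N • ∑ i, w i • m i = 0` by less than one copy of each `m i`.
  have hsplit : ((∑ i, ⌊N * w i⌋₊ • m i) t : ℝ) = ∑ i, ((⌊N * w i⌋₊ : ℝ) - N * w i) * m i t := by
    have h₀ : ∑ i, N * w i * (m i t : ℝ) = 0 := by
      simp_rw [mul_assoc, ← Finset.mul_sum, hrel, mul_zero]
    simp [Finset.sum_apply, sub_mul, h₀]
  rw [hsplit]
  refine (Finset.abs_sum_le_sum_abs _ _).trans (Finset.sum_le_sum fun i _ => ?_)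
  have hN : 0 ≤ (N : ℝ) * w i := mul_nonneg N.cast_nonneg (hw i)
  rw [abs_mul]
  refine mul_le_of_le_one_left (abs_nonneg _) (abs_le.2 ⟨?_, ?_⟩)
  · linarith [Nat.lt_floor_add_one ((N : ℝ) * w i)]
  · linarith [Nat.floor_le hN]

variable [Fintype ι]

lemma exists_nat_relation_of_real_relation (m : κ → ι → ℤ) {w : κ → ℝ} (hw : ∀ i, 0 ≤ w i)
    {i₀ : κ} (hi₀ : 0 < w i₀) (hrel : ∀ t, ∑ i, w i * m i t = 0) :
    ∃ ν : κ → ℕ, ν i₀ ≠ 0 ∧ ∑ i, ν i • m i = 0 := by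
  classical
  -- Pigeonhole on the bounded vectors `∑ i, ⌊N * w i⌋₊ • m i`, sampled at multiples of
  -- `q ≥ 1 / w i₀` so that the `i₀`-th coefficient of the difference is positive.
  set q := ⌈(w i₀)⁻¹⌉₊
  obtain ⟨r₁, r₂, hr, hu⟩ := Set.Finite.exists_lt_map_eq_of_forall_mem
    (f := fun r => ∑ i, ⌊(r * q : ℕ) * w i⌋₊ • m i)
    (fun r => sum_natFloor_smul_mem_Icc m hw hrel _) (Set.finite_Icc _ _)
  have hmono : ∀ i, ⌊(r₁ * q : ℕ) * w i⌋₊ ≤ ⌊(r₂ * q : ℕ) * w i⌋₊ := fun i =>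
    Nat.floor_le_floor (mul_le_mul_of_nonneg_right (by gcongr) (hw i))
  refine ⟨fun i => ⌊(r₂ * q : ℕ) * w i⌋₊ - ⌊(r₁ * q : ℕ) * w i⌋₊, ?_, ?_⟩
  · have hq : 1 ≤ (q : ℝ) * w i₀ := by
      calc 1 = (w i₀)⁻¹ * w i₀ := (inv_mul_cancel₀ hi₀.ne').symm
        _ ≤ q * w i₀ := by gcongr; exact Nat.le_ceil _
    have hstep : ((r₁ * q : ℕ) : ℝ) * w i₀ + 1 ≤ ((r₂ * q : ℕ) : ℝ) * w i₀ := by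
      have : (r₁ : ℝ) + 1 ≤ r₂ := by exact_mod_cast hr
      push_cast
      nlinarith [hi₀.le]
    have := Nat.floor_le_floor hstep
    rw [Nat.floor_add_one (mul_nonneg (Nat.cast_nonneg _) hi₀.le)] at this
    dsimp only
    omega
  · simp only [sub_nsmul _ (hmono _), ← sub_eq_add_neg]
    rw [Finset.sum_sub_distrib]
    exact sub_eq_zero.2 hu.symm

lemma exists_pos_dotProduct_of_forall_ne_zero (x : κ → ι → ℝ)
    (h : ∀ w ∈ stdSimplex ℝ κ, ∑ i, w i • x i ≠ 0) : ∃ c : ι → ℝ, ∀ i, 0 < x i ⬝ᵥ c := by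
  classical
  set f := Fintype.linearCombination ℝ x
  have hK : (0 : ι → ℝ) ∉ f '' stdSimplex ℝ κ := by
    rintro ⟨w, hw, hw0⟩
    exact h w hw (by simpa [f, Fintype.linearCombination_apply] using hw0)
  obtain ⟨φ, s, hφ0, hφ⟩ := geometric_hahn_banach_point_closed
    ((convex_stdSimplex ℝ κ).linear_image f)
    ((isCompact_stdSimplex ℝ κ).image f.continuous_of_finiteDimensional).isClosed hK
  refine ⟨fun t => φ (Pi.single t 1), fun i => ?_⟩
  have hxi : x i ∈ f '' stdSimplex ℝ κ :=
    ⟨Pi.single i 1, single_mem_stdSimplex ℝ i, by simp [f, Fintype.linearCombination_apply]⟩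
  have hdot : x i ⬝ᵥ (fun t => φ (Pi.single t 1)) = φ (x i) := by
    conv_rhs => rw [← Finset.univ_sum_single (x i)]
    simp only [map_sum, dotProduct]
    refine Finset.sum_congr rfl fun t _ => ?_
    rw [← smul_eq_mul, ← map_smul, ← Pi.single_smul', smul_eq_mul, mul_one]
  rw [hdot]
  exact (map_zero φ ▸ hφ0).trans (hφ _ hxi)

lemma exists_int_pos_dotProduct_of_real (m : κ → ι → ℤ) {c : ι → ℝ}
    (hc : ∀ i, 0 < (fun t => (m i t : ℝ)) ⬝ᵥ c) : ∃ c' : ι → ℤ, ∀ i, 0 < m i ⬝ᵥ c' := by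
  obtain ⟨N, hN⟩ : ∃ N : ℕ, ∀ i, (∑ t, |(m i t : ℝ)|) / 2 < N * ((fun t => (m i t : ℝ)) ⬝ᵥ c) :=
    (Filter.eventually_all.2 fun i =>
      (tendsto_natCast_atTop_atTop.atTop_mul_const (hc i)).eventually_gt_atTop _).exists
  refine ⟨fun t => round (N * c t), fun i => ?_⟩
  have hsplit : ((m i ⬝ᵥ fun t => round (N * c t) : ℤ) : ℝ) =
      N * ((fun t => (m i t : ℝ)) ⬝ᵥ c) + ∑ t, (m i t : ℝ) * (round (N * c t) - N * c t) := by
    simp only [dotProduct, Int.cast_sum, Int.cast_mul, mul_sub, Finset.sum_sub_distrib,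
      Finset.mul_sum]
    ring_nf
  have herr : |∑ t, (m i t : ℝ) * (round (N * c t) - N * c t)| ≤ (∑ t, |(m i t : ℝ)|) / 2 := by
    refine (Finset.abs_sum_le_sum_abs _ _).trans ?_
    rw [Finset.sum_div]
    refine Finset.sum_le_sum fun t _ => ?_
    rw [abs_mul, abs_sub_comm]
    linarith [mul_le_mul_of_nonneg_left (abs_sub_round (N * c t)) (abs_nonneg (m i t : ℝ))]
  have : (0 : ℝ) < ((m i ⬝ᵥ fun t => round (N * c t) : ℤ) : ℝ) := by
    rw [hsplit]
    linarith [(abs_le.1 herr).1, hN i]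
  exact_mod_cast this

theorem exists_pos_dotProduct_of_forall_nat_relation (m : κ → ι → ℤ)
    (h : ∀ ν : κ → ℕ, ∑ i, ν i • m i = 0 → ν = 0) : ∃ c : ι → ℤ, ∀ i, 0 < m i ⬝ᵥ c := by
  obtain ⟨c, hc⟩ := exists_pos_dotProduct_of_forall_ne_zero (fun i t => (m i t : ℝ))
    fun w hw hrel => by
      obtain ⟨i₀, -, hi₀⟩ := Finset.exists_lt_of_sum_lt (s := Finset.univ) (f := 0) (g := w)
        (by simp [hw.2])
      obtain ⟨ν, hν, hνrel⟩ := exists_nat_relation_of_real_relation m hw.1 hi₀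
        fun t => by simpa using congrFun hrel t
      exact hν (congrFun (h ν hνrel) i₀)
  exact exists_int_pos_dotProduct_of_real m hc

end Gordan

lemma exists_int_dotProduct_of_mem_span {n : ℕ} {s : Set (V n)} {y x : V n}
    (hs : ∀ z ∈ s, ∃ m : ℤ, y ⬝ᵥ z = m) (hx : x ∈ span ℤ s) : ∃ m : ℤ, y ⬝ᵥ x = m := by
  induction hx using Submodule.span_induction with
  | mem z hz => exact hs z hz
  | zero => exact ⟨0, by simp⟩
  | add x z _ _ hx hz =>
    obtain ⟨m₁, hm₁⟩ := hx
    obtain ⟨m₂, hm₂⟩ := hz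
    exact ⟨m₁ + m₂, by rw [dotProduct_add, hm₁, hm₂, Int.cast_add]⟩
  | smul c x _ hx =>
    obtain ⟨m, hm⟩ := hx
    exact ⟨c * m, by rw [← Int.cast_smul_eq_zsmul ℝ, dotProduct_smul, smul_eq_mul, hm,
      Int.cast_mul]⟩

/-- `E` is a `ℤ`-basis of the lattice spanned by `a` and `F` is its dual basis. -/
structure IsDualLatticeBasis {n k d : ℕ} (a : Fin k → V n) (E F : Fin d → V n) : Prop where
  span_int_eq : span ℤ (range E) = span ℤ (range a)
  mem_span : ∀ t, F t ∈ span ℝ (range a)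
  dotProduct_eq : ∀ s t, E s ⬝ᵥ F t = if s = t then 1 else 0

namespace IsDualLatticeBasis

variable {n k d : ℕ} {a : Fin k → V n} {E F : Fin d → V n}

lemma span_real_eq (h : IsDualLatticeBasis a E F) : span ℝ (range E) = span ℝ (range a) := by
  rw [← span_span_of_tower ℤ ℝ (range E), h.span_int_eq, span_span_of_tower]

lemma eq_sum_of_mem_span (h : IsDualLatticeBasis a E F) {v : V n} (hv : v ∈ span ℝ (range a)) :
    v = ∑ t, (v ⬝ᵥ F t) • E t := by
  rw [← h.span_real_eq] at hv
  obtain ⟨c, rfl⟩ := (mem_span_range_iff_exists_fun ℝ).1 hv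
  congr! with t
  simp [sum_dotProduct, h.dotProduct_eq]

lemma dotProduct_int (h : IsDualLatticeBasis a E F) {x : V n} (hx : x ∈ span ℤ (range a)) (t) :
    ∃ m : ℤ, x ⬝ᵥ F t = m := by
  rw [← h.span_int_eq] at hx
  simp_rw [dotProduct_comm x]
  refine exists_int_dotProduct_of_mem_span ?_ hx
  rintro _ ⟨s, rfl⟩
  exact ⟨if s = t then 1 else 0, by rw [dotProduct_comm, h.dotProduct_eq]; split_ifs <;> simp⟩

lemma mem_span_int (h : IsDualLatticeBasis a E F) {v : V n} (hv : v ∈ span ℝ (range a))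
    (hint : ∀ t, ∃ m : ℤ, v ⬝ᵥ F t = m) : v ∈ span ℤ (range a) := by
  choose m hm using hint
  rw [h.eq_sum_of_mem_span hv, ← h.span_int_eq]
  refine sum_mem fun t _ => ?_
  rw [hm, Int.cast_smul_eq_zsmul]
  exact zsmul_mem (subset_span (mem_range_self t)) _

end IsDualLatticeBasis

theorem exists_isDualLatticeBasis {n k : ℕ} {a : Fin k → V n}
    (hdisc : IsDiscreteSet (span ℤ (range a) : Set (V n))) :
    ∃ (d : ℕ) (E F : Fin d → V n), IsDualLatticeBasis a E F := by
  set W := span ℝ (range a)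
  set L : Submodule ℤ W := (span ℤ (range a)).comap (W.subtype.restrictScalars ℤ)
  have : DiscreteTopology L := by
    rw [discreteTopology_iff_isOpen_singleton_zero, Metric.isOpen_singleton_iff]
    obtain ⟨ε, hε, hsep⟩ := hdisc 0 (zero_mem _)
    exact ⟨ε, hε, fun y hy => Subtype.ext (Subtype.ext (hsep _ y.2 hy))⟩
  have : IsZLattice ℝ L := by
    refine ⟨eq_top_iff.2 ?_⟩
    rw [← span_span_coe_preimage]
    exact span_mono fun x hx => subset_span hx
  let e := (Module.finBasis ℤ L).ofZLatticeBasis ℝ L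
  let B : LinearMap.BilinForm ℝ W := (dotProductBilin ℝ ℝ).compl₁₂ W.subtype W.subtype
  have hB : B.Nondegenerate :=
    ⟨fun x hx => Subtype.ext (dotProduct_self_eq_zero.1 (hx x)),
      fun y hy => Subtype.ext (dotProduct_self_eq_zero.1 (hy y))⟩
  refine ⟨_, fun t => e t, fun t => B.dualBasis hB e t, ⟨?_, fun t => (B.dualBasis hB e t).2,
    fun s t => ?_⟩⟩
  · have hrange : range (fun t => (e t : V n)) = W.subtype.restrictScalars ℤ '' range e := by
      rw [← range_comp]; rfl
    rw [hrange, ← map_span, Module.Basis.ofZLatticeBasis_span, map_comap_eq, inf_eq_right,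
      span_le]
    rintro _ ⟨i, rfl⟩
    exact ⟨⟨a i, subset_span (mem_range_self i)⟩, rfl⟩
  · rw [dotProduct_comm]
    exact B.apply_dualBasis_left hB e t s

lemma IsMinGenSet.zero_notMem {n : ℕ} {A Γ : Set (V n)} (h : IsMinGenSet A Γ) : (0 : V n) ∉ A :=
  fun h₀ => h.2 (A \ {0}) (sdiff_singleton_ssubset.2 h₀)
    (by rw [IsGenSet, AddSubmonoid.closure_sdiff_singleton_zero]; exact h.1)

lemma add_mem_dualLattice {n : ℕ} {Λ : Set (V n)} {w₁ w₂ : V n} (h₁ : w₁ ∈ dualLattice Λ)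
    (h₂ : w₂ ∈ dualLattice Λ) : w₁ + w₂ ∈ dualLattice Λ := by
  refine ⟨add_mem h₁.1 h₂.1, fun v hv => ?_⟩
  obtain ⟨m₁, hm₁⟩ := h₁.2 v hv
  obtain ⟨m₂, hm₂⟩ := h₂.2 v hv
  exact ⟨m₁ + m₂, by rw [add_dotProduct, hm₁, hm₂, Int.cast_add]⟩

section GeneratedSemigroup

variable {n k : ℕ} {Γ : Set (V n)} {a : Fin k → V n}

lemma IsGenSet.sum_nsmul_mem (ha : IsGenSet (range a) Γ) (ν : Fin k → ℕ) (s : Finset (Fin k)) :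
    ∑ i ∈ s, ν i • a i ∈ Γ := by
  rw [← ha]
  exact sum_mem fun i _ => nsmul_mem (AddSubmonoid.subset_closure (mem_range_self i)) _

lemma IsPositive.nsmul_eq_zero_of_sum_eq_zero (hpos : IsPositive Γ) (ha : IsGenSet (range a) Γ)
    {ν : Fin k → ℕ} (h : ∑ i, ν i • a i = 0) (i : Fin k) : ν i • a i = 0 := by
  classical
  refine hpos _ (by simpa using ha.sum_nsmul_mem ν {i}) ?_
  have hsplit := Finset.add_sum_erase Finset.univ (fun j => ν j • a j) (Finset.mem_univ i)
  rw [h] at hsplit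
  rw [← eq_neg_of_add_eq_zero_right hsplit]
  exact ha.sum_nsmul_mem ν _

lemma diffSet_eq_span_int (ha : IsGenSet (range a) Γ) : diffSet Γ = span ℤ (range a) := by
  ext z
  constructor
  · rintro ⟨x, hx, y, hy, rfl⟩
    have hle : AddSubmonoid.closure (range a) ≤ (span ℤ (range a)).toAddSubmonoid :=
      AddSubmonoid.closure_le.2 subset_span
    rw [← ha] at hx hy
    exact sub_mem (hle hx) (hle hy)
  · intro hz
    rw [SetLike.mem_coe, ← mem_toAddSubgroup, span_int_eq_addSubgroupClosure] at hz
    have hΓ : ∀ x ∈ range a, x ∈ Γ := fun x hx => ha ▸ AddSubmonoid.subset_closure hx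
    have h₀ : (0 : V n) ∈ Γ := ha ▸ zero_mem _
    induction hz using AddSubgroup.closure_induction with
    | mem x hx => exact ⟨x, hΓ x hx, 0, h₀, (sub_zero x).symm⟩
    | zero => exact ⟨0, h₀, 0, h₀, (sub_zero 0).symm⟩
    | add _ _ _ _ h₁ h₂ =>
      obtain ⟨x₁, hx₁, y₁, hy₁, rfl⟩ := h₁
      obtain ⟨x₂, hx₂, y₂, hy₂, rfl⟩ := h₂
      rw [← ha] at hx₁ hy₁ hx₂ hy₂ ⊢
      exact ⟨x₁ + x₂, add_mem hx₁ hx₂, y₁ + y₂, add_mem hy₁ hy₂, by abel⟩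
    | neg _ _ h =>
      obtain ⟨x, hx, y, hy, rfl⟩ := h
      exact ⟨y, hy, x, hx, neg_sub x y⟩

lemma mem_dualLattice_diffSet_iff (ha : IsGenSet (range a) Γ) {y : V n} :
    y ∈ dualLattice (diffSet Γ) ↔ y ∈ span ℝ (range a) ∧ ∀ i, ∃ m : ℤ, y ⬝ᵥ a i = m := by
  rw [dualLattice, mem_ofPred_eq, diffSet_eq_span_int ha, span_span_of_tower]
  refine and_congr_right fun _ => ⟨fun h i => h _ (subset_span (mem_range_self i)),
    fun h x hx => exists_int_dotProduct_of_mem_span ?_ hx⟩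
  rintro _ ⟨i, rfl⟩
  exact h i

lemma mem_dualCone_coneOf_iff (ha : IsGenSet (range a) Γ) {y : V n} :
    y ∈ dualCone (coneOf Γ) ↔ ∀ i, 0 ≤ a i ⬝ᵥ y := by
  constructor
  · intro h i
    refine h _ ⟨1, fun _ => 1, fun _ => a i, fun _ => zero_le_one, fun _ => ?_, by simp⟩
    exact ha ▸ AddSubmonoid.subset_closure (mem_range_self i)
  · rintro h _ ⟨r, c, v, hc, hv, rfl⟩
    have hΓ : ∀ x ∈ Γ, 0 ≤ x ⬝ᵥ y := by
      rw [← ha]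
      intro x hx
      induction hx using AddSubmonoid.closure_induction with
      | mem x hx => obtain ⟨i, rfl⟩ := hx; exact h i
      | zero => simp
      | add x z _ _ hx hz => rw [add_dotProduct]; exact add_nonneg hx hz
    rw [sum_dotProduct]
    exact Finset.sum_nonneg fun j _ => by
      rw [smul_dotProduct]; exact mul_nonneg (hc j) (hΓ _ (hv j))

end GeneratedSemigroup

section SlackMatrix

variable {n k l : ℕ} {Γ : Set (V n)} {a : Fin k → V n} {b : Fin l → V n}

theorem exists_one_le_dotProduct_mem_dualSemigroup (hdisc : IsDiscreteSet (diffSet Γ))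
    (hpos : IsPositive Γ) (ha : IsGenSet (range a) Γ) (ha₀ : ∀ i, a i ≠ 0) :
    ∃ u ∈ dualSemigroup Γ, ∀ i, 1 ≤ a i ⬝ᵥ u := by
  rw [diffSet_eq_span_int ha] at hdisc
  obtain ⟨d, E, F, hEF⟩ := exists_isDualLatticeBasis hdisc
  -- `m i` is the coordinate vector of `a i` in the lattice basis `E`.
  choose m hm using fun i => hEF.dotProduct_int (subset_span (mem_range_self i))
  have hrel : ∀ ν : Fin k → ℕ, ∑ i, ν i • m i = 0 → ν = 0 := by
    intro ν hν
    have hsum : ∑ i, ν i • a i = 0 := by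
      rw [hEF.eq_sum_of_mem_span (sum_mem fun i _ => nsmul_mem (subset_span (mem_range_self i)) _)]
      refine Finset.sum_eq_zero fun t _ => ?_
      have : (∑ i, ν i • a i) ⬝ᵥ F t = ((∑ i, ν i • m i) t : ℤ) := by
        simp only [sum_dotProduct, smul_dotProduct, hm, Finset.sum_apply, Pi.smul_apply]
        push_cast [nsmul_eq_mul]
        rfl
      rw [this, hν, Pi.zero_apply, Int.cast_zero, zero_smul]
    funext i
    exact (smul_eq_zero.1 (hpos.nsmul_eq_zero_of_sum_eq_zero ha hsum i)).resolve_right (ha₀ i)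
  obtain ⟨c, hc⟩ := exists_pos_dotProduct_of_forall_nat_relation m hrel
  have hcu : ∀ i, a i ⬝ᵥ ∑ t, (c t : ℝ) • F t = ((m i ⬝ᵥ c : ℤ) : ℝ) := by
    intro i
    simp only [dotProduct_sum, dotProduct_smul, hm, smul_eq_mul]
    push_cast [dotProduct]
    simp only [mul_comm]
  have hu₁ : ∀ i, 1 ≤ a i ⬝ᵥ ∑ t, (c t : ℝ) • F t := fun i => by
    rw [hcu]; exact_mod_cast hc i
  refine ⟨_, ⟨(mem_dualLattice_diffSet_iff ha).2 ⟨sum_mem fun t _ => smul_mem _ _ (hEF.mem_span t),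
    fun i => ⟨m i ⬝ᵥ c, by rw [dotProduct_comm, hcu]⟩⟩,
    (mem_dualCone_coneOf_iff ha).2 fun i => zero_le_one.trans (hu₁ i)⟩, hu₁⟩

theorem mem_span_int_of_mem_dualLattice (ha : IsGenSet (range a) Γ)
    (hb : IsGenSet (range b) (dualSemigroup Γ)) {u : V n} (hu : u ∈ dualSemigroup Γ)
    (hu₁ : ∀ i, 1 ≤ a i ⬝ᵥ u) {w : V n} (hw : w ∈ dualLattice (diffSet Γ)) :
    w ∈ span ℤ (range b) := by
  obtain ⟨N, hN⟩ : ∃ N : ℕ, ∀ i, -(a i ⬝ᵥ w) ≤ N :=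
    ⟨⌈∑ i, |a i ⬝ᵥ w|⌉₊, fun i => (neg_le_abs _).trans <|
      (Finset.single_le_sum (fun j _ => abs_nonneg (a j ⬝ᵥ w)) (Finset.mem_univ i)).trans
        (Nat.le_ceil _)⟩
  have hNu : N • u ∈ dualSemigroup Γ := by
    rw [← hb] at hu ⊢
    exact nsmul_mem hu N
  have hwNu : w + N • u ∈ dualSemigroup Γ := by
    refine ⟨add_mem_dualLattice hw hNu.1, (mem_dualCone_coneOf_iff ha).2 fun i => ?_⟩
    rw [dotProduct_add, dotProduct_smul, nsmul_eq_mul]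
    nlinarith [hN i, hu₁ i]
  have hle : ∀ x ∈ dualSemigroup Γ, x ∈ span ℤ (range b) := by
    rw [← hb]
    exact fun x hx => AddSubmonoid.closure_le.2 (subset_span (R := ℤ)) hx
  simpa using sub_mem (hle _ hwNu) (hle _ hNu)

theorem dualLattice_subset_span_int (hdisc : IsDiscreteSet (diffSet Γ)) (hpos : IsPositive Γ)
    (ha : IsMinGenSet (range a) Γ) (hb : IsGenSet (range b) (dualSemigroup Γ)) :
    dualLattice (diffSet Γ) ⊆ span ℤ (range b) := by
  obtain ⟨u, hu, hu₁⟩ := exists_one_le_dotProduct_mem_dualSemigroup hdisc hpos ha.1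
    fun i h => ha.zero_notMem (h ▸ mem_range_self i)
  exact fun w hw => mem_span_int_of_mem_dualLattice ha.1 hb hu hu₁ hw

theorem mem_span_int_of_int_dotProduct_dual (hdisc : IsDiscreteSet (diffSet Γ))
    (hpos : IsPositive Γ) (ha : IsMinGenSet (range a) Γ)
    (hb : IsGenSet (range b) (dualSemigroup Γ)) {v : V n} (hv : v ∈ span ℝ (range a))
    (hvb : ∀ j, ∃ m : ℤ, b j ⬝ᵥ v = m) : v ∈ span ℤ (range a) := by
  obtain ⟨d, E, F, hEF⟩ := exists_isDualLatticeBasis (diffSet_eq_span_int ha.1 ▸ hdisc)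
  refine hEF.mem_span_int hv fun t => ?_
  have hF : F t ∈ dualLattice (diffSet Γ) := (mem_dualLattice_diffSet_iff ha.1).2
    ⟨hEF.mem_span t, fun i => by
      rw [dotProduct_comm]; exact hEF.dotProduct_int (subset_span (mem_range_self i)) t⟩
  refine exists_int_dotProduct_of_mem_span ?_ (dualLattice_subset_span_int hdisc hpos ha hb hF)
  rintro _ ⟨j, rfl⟩
  rw [dotProduct_comm]
  exact hvb j

theorem mem_span_int_dual_of_int_dotProduct (hdisc : IsDiscreteSet (diffSet Γ))
    (hpos : IsPositive Γ) (ha : IsMinGenSet (range a) Γ)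
    (hb : IsGenSet (range b) (dualSemigroup Γ)) {w : V n} (hw : w ∈ span ℝ (range b))
    (hwa : ∀ i, ∃ m : ℤ, a i ⬝ᵥ w = m) : w ∈ span ℤ (range b) := by
  refine dualLattice_subset_span_int hdisc hpos ha hb <| (mem_dualLattice_diffSet_iff ha.1).2
    ⟨span_le.2 ?_ hw, fun i => by simpa only [dotProduct_comm] using hwa i⟩
  rintro _ ⟨j, rfl⟩
  have hbj : b j ∈ dualSemigroup Γ := hb ▸ AddSubmonoid.subset_closure (mem_range_self j)
  exact ((mem_dualLattice_diffSet_iff ha.1).1 hbj.1).1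

end SlackMatrix

lemma setOf_intCombination_eq_intPts_inter_span {n m k : ℕ} {r : Fin k → V m}
    (hr : ∀ i, r i ∈ intPts m) (f : V n →ₗ[ℝ] V m) {a : Fin k → V n} (hfa : ∀ i, f (a i) = r i)
    (hlift : ∀ v ∈ span ℝ (range a), f v ∈ intPts m → v ∈ span ℤ (range a)) :
    {x | ∃ c : Fin k → ℤ, x = ∑ i, (c i : ℝ) • r i} = intPts m ∩ span ℝ (range r) := by
  have hra : range r = f '' range a := by rw [← range_comp]; exact congrArg range (funext hfa).symm
  ext x
  constructor
  · rintro ⟨c, rfl⟩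
    choose M hM using hr
    refine ⟨fun j => ⟨∑ i, c i * M i j, by simp [hM]⟩,
      sum_mem fun i _ => smul_mem _ _ (subset_span (mem_range_self i))⟩
  · rintro ⟨hx, hxspan⟩
    rw [SetLike.mem_coe, hra, ← map_span] at hxspan
    obtain ⟨v, hv, rfl⟩ := hxspan
    obtain ⟨c, rfl⟩ := (mem_span_range_iff_exists_fun ℤ).1 (hlift v hv hx)
    refine ⟨c, ?_⟩
    rw [map_sum]
    exact Finset.sum_congr rfl fun i _ => by rw [map_zsmul, hfa, Int.cast_smul_eq_zsmul]

/-- If `S` is the slack matrix of a positive affine semigroup, then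
`Λ_S^row = ℤ^l ∩ Row(S)` and `Λ_S^col = ℤ^k ∩ Col(S)`. -/
theorem lattice_generating_conditions {n k l : ℕ} (Γ : Set (V n))
    (hΓ : IsAffineSemigroup Γ) (hpos : IsPositive Γ)
    (S : Matrix (Fin k) (Fin l) ℤ) (hS : IsSlackMatrix Γ S) :
    LambdaRow S = intPts l ∩ RowSpace S ∧ LambdaCol S = intPts k ∩ ColSpace S := by
  obtain ⟨a, b, -, -, ha, hb, hab⟩ := hS
  have hrow : ∀ i, Matrix.of b *ᵥ a i = rowVec S i :=
    fun i => funext fun j => (dotProduct_comm _ _).trans (hab i j).symm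
  have hcol : ∀ j, Matrix.of a *ᵥ b j = colVec S j := fun j => funext fun i => (hab i j).symm
  exact ⟨setOf_intCombination_eq_intPts_inter_span (fun i j => ⟨S i j, rfl⟩)
      (Matrix.mulVecLin (Matrix.of b)) hrow
      fun v hv => mem_span_int_of_int_dotProduct_dual hΓ.2 hpos ha hb.1 hv,
    setOf_intCombination_eq_intPts_inter_span (fun j i => ⟨S i j, rfl⟩)
      (Matrix.mulVecLin (Matrix.of a)) hcol
      fun w hw => mem_span_int_dual_of_int_dotProduct hΓ.2 hpos ha hb.1 hw⟩

end
end
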